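/- Let P1, P2, P3, P4 be noncoplanar points in ℝ³ ordered so that V = det[[1,1,1,1],[x1,x2,x3,x4],[y1,y2,y3,y4],[z1,z2,z3,z4]] > 0, and let P* = (x*, y*, z*) lie strictly inside the tetrahedron P1P2P3P4. For j = 1, …, 4 let V_j be the determinant obtained by replacing the j-th column of the above 4×4 matrix by the column (1, x*, y*, z*)ᵀ, and set m_j* = |P*P_j|·V_j. Then all m_j* are positive, and the function F(x,y,z) = Σ_{j=1}^4 m_j* √((x−x_j)² + (y−y_j)² + (z−z_j)²) attains its global minimum at P*, with minimum value F(x*, y*, z*) = −det[[1,1,1,1,1],[x*,x1,x2,x3,x4],[y*,y1,y2,y3,y4],[z*,z1,z2,z3,z4],[x*²+y*²+z*², x1²+y1²+z1², x2²+y2²+z2², x3²+y3²+z3², x4²+y4²+z4²]]. -/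

import Mathlib

/-!
By Cramer's rule the determinants `V_j` are `V` times the barycentric coordinates of `P*`, so
`V_j = λ_j V > 0`, and `∑ V_j (P* - P_j) = 0` for every point `P*`. For `P* = P_j` the coordinates
would be `(0, …, 1, …, 0)`, so `P* ≠ P_j` and `m_j > 0`. By Cauchy–Schwarz
`m_j |P P_j| = V_j |P* P_j| |P P_j| ≥ V_j ⟪P - P_j, P* - P_j⟫`, and after summing over `j` the
relation `∑ V_j (P* - P_j) = 0` turns the right-hand side into `∑ V_j |P* P_j|² = F(P*)`; this sum is
minus the 5 × 5 determinant, a polynomial identity.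
-/

open Matrix
open scoped RealInnerProductSpace

namespace Matrix

variable {n R : Type*} [Fintype n] [DecidableEq n] [CommRing R]

theorem cramer_mulVec (A : Matrix n n R) (c : n → R) : cramer A (A *ᵥ c) = A.det • c := by
  rw [cramer_eq_adjugate_mulVec, mulVec_mulVec, adjugate_mul, smul_mulVec, one_mulVec]

end Matrix

section
variable {ι E : Type*} [NormedAddCommGroup E] [InnerProductSpace ℝ E]

theorem sum_dist_mul_mul_dist_le_of_sum_smul_sub_eq_zero {s : Finset ι} {w : ι → ℝ}
    {p : ι → E} {q : E} (hw : ∀ i ∈ s, 0 ≤ w i) (hq : ∑ i ∈ s, w i • (q - p i) = 0) (x : E) :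
    ∑ i ∈ s, dist q (p i) * w i * dist q (p i) ≤ ∑ i ∈ s, dist q (p i) * w i * dist x (p i) := by
  have hinner (i : ι) : ⟪x - p i, q - p i⟫ = ⟪x - q, q - p i⟫ + ‖q - p i‖ ^ 2 := by
    rw [← sub_add_sub_cancel x q (p i), inner_add_left, real_inner_self_eq_norm_sq]
  calc ∑ i ∈ s, dist q (p i) * w i * dist q (p i)
      = ⟪x - q, ∑ i ∈ s, w i • (q - p i)⟫ + ∑ i ∈ s, w i * ‖q - p i‖ ^ 2 := by
        rw [hq, inner_zero_right, zero_add]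
        exact Finset.sum_congr rfl fun i _ => by rw [dist_eq_norm]; ring
    _ = ∑ i ∈ s, w i * ⟪x - p i, q - p i⟫ := by
        simp only [inner_sum, inner_smul_right, hinner, mul_add, Finset.sum_add_distrib]
    _ ≤ ∑ i ∈ s, dist q (p i) * w i * dist x (p i) := by
        refine Finset.sum_le_sum fun i hi => ?_
        calc w i * ⟪x - p i, q - p i⟫ ≤ w i * (‖x - p i‖ * ‖q - p i‖) :=
              mul_le_mul_of_nonneg_left (real_inner_le_norm _ _) (hw i hi)
          _ = dist q (p i) * w i * dist x (p i) := by rw [dist_eq_norm, dist_eq_norm]; ring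
end

section Homogeneous

variable {n : ℕ}

def homog (q : EuclideanSpace ℝ (Fin n)) : Fin (n + 1) → ℝ := vecCons 1 q

def homogMatrix (p : Fin (n + 1) → EuclideanSpace ℝ (Fin n)) :
    Matrix (Fin (n + 1)) (Fin (n + 1)) ℝ :=
  of fun i j => homog (p j) i

theorem homogMatrix_mulVec (p : Fin (n + 1) → EuclideanSpace ℝ (Fin n)) (l : Fin (n + 1) → ℝ) :
    homogMatrix p *ᵥ l = vecCons (∑ j, l j) ⇑(∑ j, l j • p j) := by
  ext i
  refine Fin.cases ?_ (fun k => ?_) i <;>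
    simp [homogMatrix, homog, mulVec, dotProduct, mul_comm]

theorem sum_cramer_homog_smul_sub_eq_zero (p : Fin (n + 1) → EuclideanSpace ℝ (Fin n))
    (q : EuclideanSpace ℝ (Fin n)) :
    ∑ j, cramer (homogMatrix p) (homog q) j • (q - p j) = 0 := by
  set c := cramer (homogMatrix p) (homog q)
  have h : homogMatrix p *ᵥ c = (homogMatrix p).det • homog q := mulVec_cramer _ _
  rw [homogMatrix_mulVec, homog, smul_cons, smul_eq_mul, mul_one, ← WithLp.ofLp_smul,
    vecCons_inj] at h
  simp only [smul_sub, Finset.sum_sub_distrib, ← Finset.sum_smul]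
  rw [h.1, WithLp.ofLp_injective _ h.2, sub_self]

theorem cramer_homog_sum_smul {p : Fin (n + 1) → EuclideanSpace ℝ (Fin n)} {l : Fin (n + 1) → ℝ}
    (hl : ∑ j, l j = 1) :
    cramer (homogMatrix p) (homog (∑ j, l j • p j)) = (homogMatrix p).det • l := by
  rw [← cramer_mulVec, homogMatrix_mulVec, hl]; rfl

theorem cramer_homog_self (p : Fin (n + 1) → EuclideanSpace ℝ (Fin n)) (j : Fin (n + 1)) :
    cramer (homogMatrix p) (homog (p j)) = Pi.single j (homogMatrix p).det :=
  cramer_row_self _ _ j fun _ => rfl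

/-- The weight `m_j* = |P* P_j| V_j`: `cramer` replaces the `j`-th column by `(1, q)`. -/
noncomputable def inverseWeight (p : Fin (n + 1) → EuclideanSpace ℝ (Fin n))
    (q : EuclideanSpace ℝ (Fin n)) (j : Fin (n + 1)) : ℝ :=
  dist q (p j) * cramer (homogMatrix p) (homog q) j

section
variable {p : Fin (n + 1) → EuclideanSpace ℝ (Fin n)} {l : Fin (n + 1) → ℝ}

theorem inverseWeight_pos (hn : n ≠ 0) (hV : 0 < (homogMatrix p).det) (hl : ∀ j, 0 < l j)
    (hl1 : ∑ j, l j = 1) (j : Fin (n + 1)) : 0 < inverseWeight p (∑ j, l j • p j) j := by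
  have hcr := cramer_homog_sum_smul (p := p) hl1
  refine mul_pos (dist_pos.mpr fun hq => ?_) ?_
  · have : Nontrivial (Fin (n + 1)) := Fin.nontrivial_iff_two_le.mpr (by omega)
    obtain ⟨k, hk⟩ := exists_ne j
    have := congrFun (hcr.symm.trans (hq ▸ cramer_homog_self p j)) k
    simp [hk, hV.ne', (hl k).ne'] at this
  · simpa [hcr] using mul_pos hV (hl j)

theorem sum_inverseWeight_mul_dist_le (hV : 0 < (homogMatrix p).det) (hl : ∀ j, 0 ≤ l j)
    (hl1 : ∑ j, l j = 1) (x : EuclideanSpace ℝ (Fin n)) :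
    ∑ j, inverseWeight p (∑ j, l j • p j) j * dist (∑ j, l j • p j) (p j) ≤
      ∑ j, inverseWeight p (∑ j, l j • p j) j * dist x (p j) := by
  refine sum_dist_mul_mul_dist_le_of_sum_smul_sub_eq_zero (fun j _ => ?_)
    (sum_cramer_homog_smul_sub_eq_zero p _) x
  rw [cramer_homog_sum_smul hl1]
  exact mul_nonneg hV.le (hl j)

end

end Homogeneous

theorem dist_toLp_three (x y z a b c : ℝ) :
    dist !₂[x, y, z] !₂[a, b, c] = √((x - a) ^ 2 + (y - b) ^ 2 + (z - c) ^ 2) := by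
  simp [EuclideanSpace.dist_eq, Fin.sum_univ_three, Real.dist_eq, sq_abs]

theorem homogMatrix_three (x1 y1 z1 x2 y2 z2 x3 y3 z3 x4 y4 z4 : ℝ) :
    homogMatrix ![!₂[x1, y1, z1], !₂[x2, y2, z2], !₂[x3, y3, z3], !₂[x4, y4, z4]] =
      !![1, 1, 1, 1; x1, x2, x3, x4; y1, y2, y3, y4; z1, z2, z3, z4] := by
  ext i j; fin_cases i <;> fin_cases j <;> rfl

theorem cramer_homogMatrix_three (x1 y1 z1 x2 y2 z2 x3 y3 z3 x4 y4 z4 xs ys zs : ℝ) :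
    cramer (homogMatrix ![!₂[x1, y1, z1], !₂[x2, y2, z2], !₂[x3, y3, z3], !₂[x4, y4, z4]])
        (homog !₂[xs, ys, zs]) =
      ![det !![1, 1, 1, 1; xs, x2, x3, x4; ys, y2, y3, y4; zs, z2, z3, z4],
        det !![1, 1, 1, 1; x1, xs, x3, x4; y1, ys, y3, y4; z1, zs, z3, z4],
        det !![1, 1, 1, 1; x1, x2, xs, x4; y1, y2, ys, y4; z1, z2, zs, z4],
        det !![1, 1, 1, 1; x1, x2, x3, xs; y1, y2, y3, ys; z1, z2, z3, zs]] := by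
  ext j
  fin_cases j <;>
    (rw [cramer_apply]; congr 1; ext i k; fin_cases i <;> fin_cases k <;> rfl)

/- Both sides are translation invariant; at `P* = 0` this is the Laplace expansion of the
5 × 5 determinant along its first column and then along its last row. -/
theorem neg_det_paraboloid_eq_sum_det_mul_sq (x1 y1 z1 x2 y2 z2 x3 y3 z3 x4 y4 z4 xs ys zs : ℝ) :
    -det !![(1 : ℝ), 1, 1, 1, 1;
        xs, x1, x2, x3, x4;
        ys, y1, y2, y3, y4;
        zs, z1, z2, z3, z4;
        xs ^ 2 + ys ^ 2 + zs ^ 2, x1 ^ 2 + y1 ^ 2 + z1 ^ 2, x2 ^ 2 + y2 ^ 2 + z2 ^ 2,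
          x3 ^ 2 + y3 ^ 2 + z3 ^ 2, x4 ^ 2 + y4 ^ 2 + z4 ^ 2] =
      det !![(1 : ℝ), 1, 1, 1; xs, x2, x3, x4; ys, y2, y3, y4; zs, z2, z3, z4]
          * ((xs - x1) ^ 2 + (ys - y1) ^ 2 + (zs - z1) ^ 2)
        + det !![(1 : ℝ), 1, 1, 1; x1, xs, x3, x4; y1, ys, y3, y4; z1, zs, z3, z4]
          * ((xs - x2) ^ 2 + (ys - y2) ^ 2 + (zs - z2) ^ 2)
        + det !![(1 : ℝ), 1, 1, 1; x1, x2, xs, x4; y1, y2, ys, y4; z1, z2, zs, z4]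
          * ((xs - x3) ^ 2 + (ys - y3) ^ 2 + (zs - z3) ^ 2)
        + det !![(1 : ℝ), 1, 1, 1; x1, x2, x3, xs; y1, y2, y3, ys; z1, z2, z3, zs]
          * ((xs - x4) ^ 2 + (ys - y4) ^ 2 + (zs - z4) ^ 2) := by
  simp [det_succ_row_zero, Fin.sum_univ_succ, Fin.succAbove]
  ring

/-- 3D inverse Fermat–Torricelli problem: if `P*` lies strictly inside the
tetrahedron `P1P2P3P4` (with `V > 0`), the weights `m_j* = |P*P_j|·V_j` are all
positive and `F` attains its global minimum at `P*`, with minimum value given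
by minus the 5×5 determinant. -/
theorem inverse_problem_minimum_3d
    (x1 y1 z1 x2 y2 z2 x3 y3 z3 x4 y4 z4 xs ys zs : ℝ)
    (hV : 0 < Matrix.det !![(1:ℝ), 1, 1, 1; x1, x2, x3, x4;
        y1, y2, y3, y4; z1, z2, z3, z4])
    (hint : ∃ l1 l2 l3 l4 : ℝ, 0 < l1 ∧ 0 < l2 ∧ 0 < l3 ∧ 0 < l4 ∧
        l1 + l2 + l3 + l4 = 1 ∧
        xs = l1*x1 + l2*x2 + l3*x3 + l4*x4 ∧
        ys = l1*y1 + l2*y2 + l3*y3 + l4*y4 ∧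
        zs = l1*z1 + l2*z2 + l3*z3 + l4*z4)
    (m1 m2 m3 m4 : ℝ)
    (hm1 : m1 = Real.sqrt ((xs-x1)^2 + (ys-y1)^2 + (zs-z1)^2)
        * Matrix.det !![(1:ℝ), 1, 1, 1; xs, x2, x3, x4;
            ys, y2, y3, y4; zs, z2, z3, z4])
    (hm2 : m2 = Real.sqrt ((xs-x2)^2 + (ys-y2)^2 + (zs-z2)^2)
        * Matrix.det !![(1:ℝ), 1, 1, 1; x1, xs, x3, x4;
            y1, ys, y3, y4; z1, zs, z3, z4])
    (hm3 : m3 = Real.sqrt ((xs-x3)^2 + (ys-y3)^2 + (zs-z3)^2)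
        * Matrix.det !![(1:ℝ), 1, 1, 1; x1, x2, xs, x4;
            y1, y2, ys, y4; z1, z2, zs, z4])
    (hm4 : m4 = Real.sqrt ((xs-x4)^2 + (ys-y4)^2 + (zs-z4)^2)
        * Matrix.det !![(1:ℝ), 1, 1, 1; x1, x2, x3, xs;
            y1, y2, y3, ys; z1, z2, z3, zs])
    (F : ℝ → ℝ → ℝ → ℝ)
    (hF : ∀ x y z, F x y z =
        m1 * Real.sqrt ((x-x1)^2 + (y-y1)^2 + (z-z1)^2)
      + m2 * Real.sqrt ((x-x2)^2 + (y-y2)^2 + (z-z2)^2)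
      + m3 * Real.sqrt ((x-x3)^2 + (y-y3)^2 + (z-z3)^2)
      + m4 * Real.sqrt ((x-x4)^2 + (y-y4)^2 + (z-z4)^2)) :
    0 < m1 ∧ 0 < m2 ∧ 0 < m3 ∧ 0 < m4 ∧
    (∀ x y z : ℝ, F xs ys zs ≤ F x y z) ∧
    F xs ys zs = -Matrix.det
      !![(1:ℝ), 1, 1, 1, 1;
         xs, x1, x2, x3, x4;
         ys, y1, y2, y3, y4;
         zs, z1, z2, z3, z4;
         xs^2 + ys^2 + zs^2, x1^2 + y1^2 + z1^2, x2^2 + y2^2 + z2^2,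
           x3^2 + y3^2 + z3^2, x4^2 + y4^2 + z4^2] := by
  obtain ⟨l1, l2, l3, l4, hl1, hl2, hl3, hl4, hsum, hx, hy, hz⟩ := hint
  set p := ![!₂[x1, y1, z1], !₂[x2, y2, z2], !₂[x3, y3, z3], !₂[x4, y4, z4]]
  set l := ![l1, l2, l3, l4]
  have hl : ∀ j, 0 < l j := by intro j; fin_cases j <;> assumption
  have hl_sum : ∑ j, l j = 1 := by simpa [l, Fin.sum_univ_four] using hsum
  set q := ∑ j, l j • p j
  have hq : !₂[xs, ys, zs] = q := by
    ext i; fin_cases i <;> simp [q, l, p, Fin.sum_univ_four, hx, hy, hz]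
  have hVp : 0 < (homogMatrix p).det := by rwa [homogMatrix_three]
  have hm : ∀ j, inverseWeight p q j = ![m1, m2, m3, m4] j := by
    intro j
    fin_cases j <;>
      simp [inverseWeight, ← hq, cramer_homogMatrix_three, p, dist_toLp_three, hm1, hm2, hm3, hm4]
  have hF_sum (x y z : ℝ) :
      F x y z = ∑ j, inverseWeight p q j * dist !₂[x, y, z] (p j) := by
    simp [hF, Fin.sum_univ_four, hm, p, dist_toLp_three]
  have hm_pos := fun j => (hm j).symm ▸ inverseWeight_pos (by norm_num) hVp hl hl_sum j
  refine ⟨hm_pos 0, hm_pos 1, hm_pos 2, hm_pos 3, fun x y z => ?_, ?_⟩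
  · rw [hF_sum, hF_sum, hq]
    exact sum_inverseWeight_mul_dist_le hVp (fun j => (hl j).le) hl_sum _
  · rw [neg_det_paraboloid_eq_sum_det_mul_sq, hF, hm1, hm2, hm3, hm4]
    simp only [mul_right_comm (√_)]
    rw [Real.mul_self_sqrt (by positivity), Real.mul_self_sqrt (by positivity),
      Real.mul_self_sqrt (by positivity), Real.mul_self_sqrt (by positivity)]
    ring
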